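/- arXiv:1904.03322 — 2 statements merged into one kernel-verified Lean document; each statement's English description precedes it below -/
import Mathlib

section
/- When every agent truthfully reports her desired set, Mechanism 1 returns a maxmin-optimal allocation: the allocation x with x_{ij} = γ*·w_{ij}, where γ* = max{γ ≥ 0 : γ·Σ_i w_{ij} ≤ s_j for all j}, satisfies min_i u_i(x_i) = max over all valid allocations y of min_i u_i(y_i). -/
open scoped Classical
open Real

namespace BandwidthAlloc

/-- A bid: `none` denotes the special bid β; `some r` denotes the real bid `r ≥ 0`. -/
abbrev Bid := Option NNReal

/-- Numeric value of a bid (β is treated as 0 in arithmetic). -/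
noncomputable def bval (b : Bid) : ℝ := ((b.getD 0 : NNReal) : ℝ)

/-- A bid is positive when it is neither 0 nor β. -/
def posBid (b : Bid) : Prop := 0 < bval b

/-- Utility of the bundle `xi` for an agent with desired set `Ri`: `min_{j ∈ Ri} xi j`. -/
noncomputable def bundleUtil {m : ℕ} (Ri : Finset (Fin m)) (xi : Fin m → ℝ) : ℝ :=
  sInf (xi '' (Ri : Set (Fin m)))

/-- Bandwidth-allocation utility of agent `i` under allocation `x`. -/
noncomputable def util {n m : ℕ} (R : Fin n → Finset (Fin m))
    (x : Fin n → Fin m → ℝ) (i : Fin n) : ℝ :=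
  bundleUtil (R i) (x i)

/-- Weights: `w R i j = 1` iff `j ∈ R i`, else `0`. -/
noncomputable def w {n m : ℕ} (R : Fin n → Finset (Fin m)) (i : Fin n) (j : Fin m) : ℝ :=
  if j ∈ R i then 1 else 0

/-- A valid (nonnegative, supply-respecting) allocation. -/
def validAlloc {n m : ℕ} (s : Fin m → ℝ) (x : Fin n → Fin m → ℝ) : Prop :=
  (∀ i j, 0 ≤ x i j) ∧ ∀ j, ∑ i, x i j ≤ s j

/-- CES welfare of the utility vector `v` (`ρ = 0` is Nash welfare; for `ρ < 0` a zero
utility yields welfare `0`, the limiting convention). -/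
noncomputable def ces (ρ : ℝ) {n : ℕ} (v : Fin n → ℝ) : ℝ :=
  if ρ = 0 then ∏ i, v i
  else if ρ < 0 ∧ ∃ i, v i = 0 then 0
  else (∑ i, v i ^ ρ) ^ (1 / ρ)

/-- `Ψ_ρ`: `x` is a valid allocation maximizing CES welfare among valid allocations. -/
def maxCES (ρ : ℝ) {n m : ℕ} (s : Fin m → ℝ) (R : Fin n → Finset (Fin m))
    (x : Fin n → Fin m → ℝ) : Prop :=
  validAlloc s x ∧ ∀ y, validAlloc s y → ces ρ (util R y) ≤ ces ρ (util R x)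

/-- Constraint curve: continuous, normalized, strictly increasing, nonnegative on `[0,∞)`. -/
def IsConstraintCurve (f : ℝ → ℝ) : Prop :=
  ContinuousOn f (Set.Ici 0) ∧ f 0 = 0 ∧ StrictMonoOn f (Set.Ici 0) ∧
    ∀ y ∈ Set.Ici (0 : ℝ), 0 ≤ f y

/-- `g` is identically zero on `[0,∞)`. -/
def zeroOn (g : ℝ → ℝ) : Prop := ∀ y ∈ Set.Ici (0 : ℝ), g y = 0

/-- Price curve: continuous, normalized, nonnegative, and either strictly increasing or
identically zero on `[0,∞)`. -/
def IsPriceCurve (g : ℝ → ℝ) : Prop :=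
  ContinuousOn g (Set.Ici 0) ∧ g 0 = 0 ∧ (∀ y ∈ Set.Ici (0 : ℝ), 0 ≤ g y) ∧
    (StrictMonoOn g (Set.Ici 0) ∨ zeroOn g)

/-- Cost of the bundle `xi` under price curves `g`. -/
noncomputable def cost {m : ℕ} (g : Fin m → ℝ → ℝ) (xi : Fin m → ℝ) : ℝ :=
  ∑ j, g j (xi j)

/-- `xi` is in the demand set of an agent with desired set `Ri` under price curves `g`. -/
def inDemand {m : ℕ} (g : Fin m → ℝ → ℝ) (Ri : Finset (Fin m)) (xi : Fin m → ℝ) : Prop :=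
  (∀ j, 0 ≤ xi j) ∧ cost g xi ≤ 1 ∧
    ∀ yi : Fin m → ℝ, (∀ j, 0 ≤ yi j) → cost g yi ≤ 1 → bundleUtil Ri yi ≤ bundleUtil Ri xi

/-- Price curve equilibrium. -/
def isPCE {n m : ℕ} (s : Fin m → ℝ) (R : Fin n → Finset (Fin m))
    (x : Fin n → Fin m → ℝ) (g : Fin m → ℝ → ℝ) : Prop :=
  (∀ i, inDemand g (R i) (x i)) ∧ (∀ j, ∑ i, x i j ≤ s j) ∧
    ∀ j, ¬ zeroOn (g j) → ∑ i, x i j = s j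

/-- Step 1 of the ATP allocation rule: proportional sharing. -/
noncomputable def atp1 {n m : ℕ} (s : Fin m → ℝ) (b : Fin n → Fin m → Bid)
    (i : Fin n) (j : Fin m) : ℝ :=
  bval (b i j) / (∑ k, bval (b k j)) * s j

/-- Steps 1–2 of the ATP allocation rule: goods with a positive bid are shared
proportionally; on a good where everyone bids `0` or `β`, an agent bidding `β` receives
as much as she receives of some fixed good on which she bids positively. -/
noncomputable def atp2 {n m : ℕ} (s : Fin m → ℝ) (b : Fin n → Fin m → Bid)
    (i : Fin n) (j : Fin m) : ℝ :=
  if ∃ k, posBid (b k j) then atp1 s b i j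
  else if b i j = none then
    (if h : ∃ ℓ, posBid (b i ℓ) then atp1 s b i (Classical.choose h) else 0)
  else 0

/-- The full ATP allocation rule (steps 1–3): agents bidding `β` on an oversubscribed
step-2 good are penalized with the zero bundle. -/
noncomputable def atp {n m : ℕ} (s : Fin m → ℝ) (b : Fin n → Fin m → Bid)
    (i : Fin n) (j : Fin m) : ℝ :=
  if ∃ ℓ, (¬ ∃ k, posBid (b k ℓ)) ∧ b i ℓ = none ∧ s ℓ < ∑ k, atp2 s b k ℓ then 0
  else atp2 s b i j

/-- Total bid-constraint cost `C_f(b_i)` of agent `i`'s bid vector. -/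
noncomputable def bidCost {m : ℕ} (f : Fin m → ℝ → ℝ) (bi : Fin m → Bid) : ℝ :=
  ∑ j, f j (bval (bi j))

/-- A bid vector is feasible if it obeys the bid constraint `C_f(b_i) ≤ 1`. -/
def feasibleBid {m : ℕ} (f : Fin m → ℝ → ℝ) (bi : Fin m → Bid) : Prop :=
  bidCost f bi ≤ 1

/-- `b` is a Nash equilibrium of `ATP(f)`: all bids are feasible and no agent can
strictly increase her utility by a unilateral feasible deviation. -/
def isNE {n m : ℕ} (s : Fin m → ℝ) (f : Fin m → ℝ → ℝ)
    (R : Fin n → Finset (Fin m)) (b : Fin n → Fin m → Bid) : Prop :=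
  (∀ i, feasibleBid f (b i)) ∧
    ∀ (i : Fin n) (bi' : Fin m → Bid), feasibleBid f bi' →
      util R (atp s (Function.update b i bi')) i ≤ util R (atp s b) i

/-- `NE_X(ATP(f))`: allocations arising from Nash equilibrium bid profiles. -/
def NEX {n m : ℕ} (s : Fin m → ℝ) (f : Fin m → ℝ → ℝ)
    (R : Fin n → Finset (Fin m)) : Set (Fin n → Fin m → ℝ) :=
  {x | ∃ b, isNE s f R b ∧ x = atp s b}

/-- `f` is homogeneous of degree `α` on the nonnegative reals. -/
def Homog (f : ℝ → ℝ) (α : ℝ) : Prop :=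
  ∀ c ≥ (0 : ℝ), ∀ y ≥ (0 : ℝ), f (c * y) = c ^ α * f y

/-- `γ* = max {γ ≥ 0 : γ · Σ_i w_{ij} ≤ s_j for all j}` of Mechanism 1. -/
noncomputable def gammaStar {n m : ℕ} (s : Fin m → ℝ) (R : Fin n → Finset (Fin m)) : ℝ :=
  sSup {γ : ℝ | 0 ≤ γ ∧ ∀ j, γ * ∑ i, w R i j ≤ s j}

/-- Mechanism 1: `x i j = γ* · w i j`. -/
noncomputable def mech1 {n m : ℕ} (s : Fin m → ℝ) (R : Fin n → Finset (Fin m)) :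
    Fin n → Fin m → ℝ :=
  fun i j => gammaStar s R * w R i j

/-- `min_i u_i(x_i)`. -/
noncomputable def minUtil {n m : ℕ} (R : Fin n → Finset (Fin m))
    (x : Fin n → Fin m → ℝ) : ℝ :=
  sInf (Set.range fun i => util R x i)

/-- `x` is maxmin-optimal: valid and attaining the maximum of `min_i u_i` over valid
allocations. -/
def maxminOptimal {n m : ℕ} (s : Fin m → ℝ) (R : Fin n → Finset (Fin m))
    (x : Fin n → Fin m → ℝ) : Prop :=
  validAlloc s x ∧ ∀ y, validAlloc s y → minUtil R y ≤ minUtil R x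

/-- Mechanism 2: `P i k` is the set agent `i` claims agent `k` desires.
`eta P i = |{k : R_k(k) ≠ R_k(i)}|`. -/
noncomputable def eta {n m : ℕ} (P : Fin n → Fin n → Finset (Fin m)) (i : Fin n) : ℕ :=
  (Finset.univ.filter fun k => P k k ≠ P i k).card

/-- Agent `i` is in `N̄`: for some `k`, `R_k(k) ⊊ R_k(i)`. -/
def inNbar {n m : ℕ} (P : Fin n → Fin n → Finset (Fin m)) (i : Fin n) : Prop :=
  ∃ k, P k k ⊂ P i k

/-- The penalty factor `α_i` of Mechanism 2. -/
noncomputable def alpha {n m : ℕ} (P : Fin n → Fin n → Finset (Fin m)) (i : Fin n) : ℝ :=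
  if inNbar P i then 0 else 1 - (eta P i : ℝ) / n

/-- Effective reported sets of Mechanism 2: agents in `N̄` are replaced by `∅`. -/
noncomputable def effSets {n m : ℕ} (P : Fin n → Fin n → Finset (Fin m)) :
    Fin n → Finset (Fin m) :=
  fun i => if inNbar P i then ∅ else P i i

/-- Mechanism 2: the allocation `x_i = α_i · y_i` where `y` is the Mechanism 1 outcome
on the effective sets. -/
noncomputable def mech2 {n m : ℕ} (s : Fin m → ℝ) (P : Fin n → Fin n → Finset (Fin m)) :
    Fin n → Fin m → ℝ :=
  fun i j => alpha P i * mech1 s (effSets P) i j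

/-! Mechanism 1 gives every agent exactly `γ*` of each good she wants. Conversely, if a valid
allocation guarantees every agent utility `t ≥ 0`, then agent `i` holds at least `t · w_{ij}`
of good `j`, so the supply constraints force `t · Σ_i w_{ij} ≤ s_j`: `t` is a feasible scale and
hence `t ≤ γ*`. -/

def feasibleScales {ι : Type*} (c s : ι → ℝ) : Set ℝ :=
  {γ | 0 ≤ γ ∧ ∀ j, γ * c j ≤ s j}

theorem isClosed_feasibleScales {ι : Type*} (c s : ι → ℝ) : IsClosed (feasibleScales c s) := by
  simp only [feasibleScales, Set.ofPred_and, Set.ofPred_forall]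
  exact (isClosed_le continuous_const continuous_id).inter <| isClosed_iInter fun j =>
    isClosed_le (continuous_id.mul continuous_const) continuous_const

theorem bddAbove_feasibleScales {ι : Type*} {c s : ι → ℝ} {j : ι} (hcj : 0 < c j) :
    BddAbove (feasibleScales c s) :=
  ⟨s j / c j, fun _ hγ => (le_div_iff₀ hcj).2 (hγ.2 j)⟩

/-- When the scales are unbounded, `sSup` returns the junk value `0`, which is feasible too. -/
theorem sSup_feasibleScales_mem {ι : Type*} {c s : ι → ℝ} (hs : ∀ j, 0 ≤ s j) :
    sSup (feasibleScales c s) ∈ feasibleScales c s := by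
  have hzero : (0 : ℝ) ∈ feasibleScales c s := ⟨le_rfl, fun j => by simpa using hs j⟩
  by_cases hbdd : BddAbove (feasibleScales c s)
  · exact (isClosed_feasibleScales c s).csSup_mem ⟨0, hzero⟩ hbdd
  · rwa [Real.sSup_of_not_bddAbove hbdd]

theorem bundleUtil_le {m : ℕ} {Ri : Finset (Fin m)} (xi : Fin m → ℝ) {j : Fin m}
    (hj : j ∈ Ri) : bundleUtil Ri xi ≤ xi j :=
  csInf_le ((Ri.finite_toSet.image xi).bddBelow) ⟨j, hj, rfl⟩

theorem bundleUtil_eq_of_eqOn {m : ℕ} {Ri : Finset (Fin m)} {xi : Fin m → ℝ} {a : ℝ}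
    (hRi : Ri.Nonempty) (hxi : Set.EqOn xi (fun _ => a) Ri) : bundleUtil Ri xi = a := by
  rw [bundleUtil, hxi.image_eq, (Finset.coe_nonempty.2 hRi).image_const, csInf_singleton]

section Weights

variable {n m : ℕ} (R : Fin n → Finset (Fin m))

theorem w_nonneg (i : Fin n) (j : Fin m) : 0 ≤ w R i j := by
  unfold w; split_ifs <;> norm_num

theorem w_of_mem {i : Fin n} {j : Fin m} (hj : j ∈ R i) : w R i j = 1 := if_pos hj

theorem w_of_not_mem {i : Fin n} {j : Fin m} (hj : j ∉ R i) : w R i j = 0 := if_neg hj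

theorem sum_w_pos {i : Fin n} {j : Fin m} (hj : j ∈ R i) : 0 < ∑ k, w R k j :=
  calc (0 : ℝ) < w R i j := by rw [w_of_mem R hj]; exact one_pos
    _ ≤ ∑ k, w R k j := Finset.single_le_sum (fun k _ => w_nonneg R k j) (Finset.mem_univ i)

theorem gammaStar_mem {s : Fin m → ℝ} (hs : ∀ j, 0 ≤ s j) :
    gammaStar s R ∈ feasibleScales (fun j => ∑ i, w R i j) s :=
  sSup_feasibleScales_mem hs

theorem le_gammaStar {i : Fin n} {j : Fin m} (hj : j ∈ R i) {s : Fin m → ℝ} {γ : ℝ}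
    (hγ : γ ∈ feasibleScales (fun j => ∑ i, w R i j) s) : γ ≤ gammaStar s R :=
  le_csSup (bddAbove_feasibleScales (sum_w_pos R hj)) hγ

end Weights

section Allocations

variable {n m : ℕ} {s : Fin m → ℝ} {R : Fin n → Finset (Fin m)}

theorem mech1_validAlloc (hs : ∀ j, 0 ≤ s j) : validAlloc s (mech1 s R) := by
  obtain ⟨hγ0, hγ⟩ := gammaStar_mem R hs
  refine ⟨fun i j => mul_nonneg hγ0 (w_nonneg R i j), fun j => ?_⟩
  simpa only [mech1, ← Finset.mul_sum] using hγ j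

theorem util_mech1 {i : Fin n} (hRi : (R i).Nonempty) : util R (mech1 s R) i = gammaStar s R :=
  bundleUtil_eq_of_eqOn hRi fun j hj => by simp only [mech1, w_of_mem R hj, mul_one]

theorem minUtil_mech1 [Nonempty (Fin n)] (hR : ∀ i, (R i).Nonempty) :
    minUtil R (mech1 s R) = gammaStar s R := by
  simp only [minUtil, util_mech1 (hR _), Set.range_const, csInf_singleton]

theorem minUtil_le_util (x : Fin n → Fin m → ℝ) (i : Fin n) : minUtil R x ≤ util R x i :=
  csInf_le (Set.finite_range _).bddBelow ⟨i, rfl⟩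

theorem minUtil_mem_feasibleScales {y : Fin n → Fin m → ℝ} (hy : validAlloc s y)
    (ht : 0 ≤ minUtil R y) : minUtil R y ∈ feasibleScales (fun j => ∑ i, w R i j) s := by
  refine ⟨ht, fun j => ?_⟩
  have hle : ∀ i, minUtil R y * w R i j ≤ y i j := fun i => by
    by_cases hj : j ∈ R i
    · rw [w_of_mem R hj, mul_one]
      exact (minUtil_le_util y i).trans (bundleUtil_le (y i) hj)
    · rw [w_of_not_mem R hj, mul_zero]
      exact hy.1 i j
  calc minUtil R y * ∑ i, w R i j = ∑ i, minUtil R y * w R i j := Finset.mul_sum _ _ _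
    _ ≤ ∑ i, y i j := Finset.sum_le_sum fun i _ => hle i
    _ ≤ s j := hy.2 j

theorem minUtil_le_gammaStar {i : Fin n} {j : Fin m} (hj : j ∈ R i)
    {y : Fin n → Fin m → ℝ} (hy : validAlloc s y) : minUtil R y ≤ gammaStar s R := by
  rcases le_or_gt (minUtil R y) 0 with ht | ht
  · exact ht.trans (Real.sSup_nonneg fun _ hγ => hγ.1)
  · exact le_gammaStar R hj (minUtil_mem_feasibleScales hy ht.le)

end Allocations

/-- under truthful reports, Mechanism 1 (the allocation
`x_{ij} = γ*·w_{ij}` with `γ* = max {γ ≥ 0 : γ·Σ_i w_{ij} ≤ s_j ∀ j}`) returns a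
maxmin-optimal allocation: it is valid and
`min_i u_i(x_i) = max_{valid y} min_i u_i(y_i)`. -/
theorem mech1_truthful_optimal {n m : ℕ} (s : Fin m → ℝ) (hs : ∀ j, 0 < s j)
    (R : Fin n → Finset (Fin m)) (hR : ∀ i, (R i).Nonempty) :
    maxminOptimal s R (mech1 s R) := by
  refine ⟨mech1_validAlloc fun j => (hs j).le, fun y hy => ?_⟩
  rcases isEmpty_or_nonempty (Fin n) with hn | hn
  · simp only [minUtil, Set.range_eq_empty, le_refl]
  · obtain ⟨j, hj⟩ := hR (Classical.arbitrary (Fin n))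
    rw [minUtil_mech1 hR]
    exact minUtil_le_gammaStar hj hy

end BandwidthAlloc
end

section
/- For every ρ ∈ (-∞, 1] the social choice rule Ψ_ρ does not satisfy no veto power: in the instance with n ≥ 2 agents and n goods each of supply 1, where R_i = {i} for every agent i, the allocation x with x_{ii} = 1 for i ∈ {1,…,n−1}, x_{nn} = 0, and x_{ij} = 0 otherwise satisfies u_i(x_i) ≥ u_i(y_i) for every valid allocation y and every agent i ≤ n−1, yet x ∉ Ψ_ρ(u); indeed the unique element of Ψ_ρ(u) has x_{ii} = 1 for all i. -/
open scoped Classical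
open Real

namespace BandwidthAlloc

/-
For `R_i = {i}` and unit supplies, a valid allocation gives every agent a utility in `[0, 1]`,
and CES welfare is maximised on `[0, 1]^n` exactly at the all-ones vector (for every `ρ`).
So `Ψ_ρ(u)` consists of the diagonal allocation alone, which differs from `x` in the last
agent's good, although `x` already gives agents `1, …, n-1` their best possible utility `1`.
-/

theorem bundleUtil_singleton {m : ℕ} (j : Fin m) (xi : Fin m → ℝ) :
    bundleUtil {j} xi = xi j := by
  simp [bundleUtil]

section CES

variable {n : ℕ} (ρ : ℝ) {v : Fin n → ℝ}

theorem ces_one_of_ne_zero (hρ : ρ ≠ 0) :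
    ces ρ (fun _ : Fin n => (1 : ℝ)) = (n : ℝ) ^ (1 / ρ) := by
  simp [ces, hρ]

theorem ces_lt_ces_one (h0 : ∀ i, 0 ≤ v i) (h1 : ∀ i, v i ≤ 1) {i : Fin n} (hi : v i < 1) :
    ces ρ v < ces ρ (fun _ : Fin n => (1 : ℝ)) := by
  have hn : (0 : ℝ) < n := by exact_mod_cast i.pos
  have hn_eq : (n : ℝ) = ∑ _j : Fin n, (1 : ℝ) := by simp
  rcases lt_trichotomy ρ 0 with hρ | rfl | hρ
  · rw [ces_one_of_ne_zero ρ hρ.ne, ces, if_neg hρ.ne]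
    split_ifs with hzero
    · positivity
    have hpos : ∀ j, 0 < v j := fun j => (h0 j).lt_of_ne' fun hj => hzero ⟨hρ, j, hj⟩
    have hsum : (n : ℝ) < ∑ j, v j ^ ρ := hn_eq ▸ Finset.sum_lt_sum
      (fun j _ => Real.one_le_rpow_of_pos_of_le_one_of_nonpos (hpos j) (h1 j) hρ.le)
      ⟨i, Finset.mem_univ i, Real.one_lt_rpow_of_pos_of_lt_one_of_neg (hpos i) hi hρ⟩
    exact Real.rpow_lt_rpow_of_neg hn hsum (one_div_neg.mpr hρ)
  · have hprod_le : ∏ j, v j ≤ v i := by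
      rw [← Finset.mul_prod_erase Finset.univ v (Finset.mem_univ i)]
      exact mul_le_of_le_one_right (h0 i)
        (Finset.prod_le_one (fun j _ => h0 j) fun j _ => h1 j)
    simpa [ces] using hprod_le.trans_lt hi
  · rw [ces_one_of_ne_zero ρ hρ.ne', ces, if_neg hρ.ne', if_neg fun h => hρ.not_gt h.1]
    have hsum : ∑ j, v j ^ ρ < n := hn_eq ▸ Finset.sum_lt_sum
      (fun j _ => Real.rpow_le_one (h0 j) (h1 j) hρ.le)
      ⟨i, Finset.mem_univ i, Real.rpow_lt_one (h0 i) hi hρ⟩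
    exact Real.rpow_lt_rpow (Finset.sum_nonneg fun j _ => Real.rpow_nonneg (h0 j) ρ) hsum
      (by positivity)

theorem ces_le_ces_one (h0 : ∀ i, 0 ≤ v i) (h1 : ∀ i, v i ≤ 1) :
    ces ρ v ≤ ces ρ (fun _ : Fin n => (1 : ℝ)) := by
  by_cases h : ∃ i, v i < 1
  · obtain ⟨i, hi⟩ := h
    exact (ces_lt_ces_one ρ h0 h1 hi).le
  · push Not at h
    rw [funext fun i => le_antisymm (h1 i) (h i)]

theorem eq_one_of_ces_one_le (h0 : ∀ i, 0 ≤ v i) (h1 : ∀ i, v i ≤ 1)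
    (hle : ces ρ (fun _ : Fin n => (1 : ℝ)) ≤ ces ρ v) : v = fun _ => 1 := by
  funext i
  by_contra hi
  exact (ces_lt_ces_one ρ h0 h1 ((h1 i).lt_of_ne hi)).not_ge hle

end CES

section ValidAlloc

variable {n m : ℕ} {s : Fin m → ℝ} {y : Fin n → Fin m → ℝ}

theorem validAlloc.le_supply (hy : validAlloc s y) (i : Fin n) (j : Fin m) : y i j ≤ s j :=
  (Finset.single_le_sum (fun k _ => hy.1 k j) (Finset.mem_univ i)).trans (hy.2 j)

theorem validAlloc.eq_zero_of_eq_supply (hy : validAlloc s y) {i k : Fin n} {j : Fin m}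
    (hk : y k j = s j) (hik : i ≠ k) : y i j = 0 := by
  have hpair : y k j + y i j ≤ s j :=
    calc y k j + y i j = ∑ l ∈ {k, i}, y l j :=
          (Finset.sum_pair (f := fun l => y l j) hik.symm).symm
      _ ≤ ∑ l, y l j := Finset.sum_le_sum_of_subset_of_nonneg (Finset.subset_univ _)
          fun l _ _ => hy.1 l j
      _ ≤ s j := hy.2 j
  exact le_antisymm (by linarith) (hy.1 i j)

end ValidAlloc

theorem maxCES_singleton_iff {n : ℕ} (ρ : ℝ) (z : Fin n → Fin n → ℝ) :
    maxCES ρ (fun _ => 1) (fun i => {i}) z ↔ z = fun i j => if i = j then 1 else 0 := by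
  set xd : Fin n → Fin n → ℝ := fun i j => if i = j then 1 else 0
  have hutil : ∀ y : Fin n → Fin n → ℝ, util (fun i => {i}) y = fun i => y i i :=
    fun y => funext fun i => bundleUtil_singleton i (y i)
  have hxd_valid : validAlloc (fun _ => 1) xd :=
    ⟨fun i j => by by_cases h : i = j <;> simp [xd, h], fun j => by simp [xd]⟩
  have hxd_util : util (fun i => {i}) xd = fun _ => 1 := by simp [hutil, xd]
  constructor
  · rintro ⟨hz, hz_max⟩
    have hdiag : (fun i => z i i) = fun _ => 1 :=
      eq_one_of_ces_one_le ρ (fun i => hz.1 i i) (fun i => hz.le_supply i i)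
        (by simpa only [hxd_util, hutil z] using hz_max xd hxd_valid)
    funext i j
    by_cases hij : i = j
    · subst hij
      simpa [xd] using congrFun hdiag i
    · simpa [xd, hij] using hz.eq_zero_of_eq_supply (congrFun hdiag j) hij
  · rintro rfl
    refine ⟨hxd_valid, fun y hy => ?_⟩
    rw [hxd_util, hutil]
    exact ces_le_ces_one ρ (fun i => hy.1 i i) (fun i => hy.le_supply i i)

theorem no_veto_power_general (n : ℕ) (hn : 2 ≤ n) (ρ : ℝ) :
    let s : Fin n → ℝ := fun _ => 1
    let R : Fin n → Finset (Fin n) := fun i => {i}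
    let x : Fin n → Fin n → ℝ := fun i j => if i = j ∧ (i : ℕ) < n - 1 then 1 else 0
    let xd : Fin n → Fin n → ℝ := fun i j => if i = j then 1 else 0
    (∀ i : Fin n, (i : ℕ) < n - 1 →
        ∀ y, validAlloc s y → util R y i ≤ util R x i) ∧
      ¬ maxCES ρ s R x ∧
      maxCES ρ s R xd ∧
      ∀ z, maxCES ρ s R z → z = xd := by
  intro s R x xd
  refine ⟨fun i hi y hy => ?_, fun hx => ?_, (maxCES_singleton_iff ρ xd).mpr rfl,
    fun z => (maxCES_singleton_iff ρ z).mp⟩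
  · simpa [R, x, util, bundleUtil_singleton, hi] using hy.le_supply i i
  · have hlast := congrFun (congrFun ((maxCES_singleton_iff ρ x).mp hx) ⟨n - 1, by omega⟩)
      ⟨n - 1, by omega⟩
    simp [x] at hlast

/-- `Ψ_ρ` violates no veto power for every `ρ ≤ 1`: with `n ≥ 2` agents,
`n` goods of supply 1 and `R_i = {i}`, the allocation giving good `i` fully to agent `i`
for `i < n-1` (and nothing to agent `n`) is a favorite allocation of all agents but the
last, yet it is not in `Ψ_ρ(u)`; the unique element of `Ψ_ρ(u)` is the diagonal
allocation with `x_{ii} = 1` for all `i`. -/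
theorem no_veto_power (n : ℕ) (hn : 2 ≤ n) (ρ : ℝ) (hρ : ρ ≤ 1) :
    let s : Fin n → ℝ := fun _ => 1
    let R : Fin n → Finset (Fin n) := fun i => {i}
    let x : Fin n → Fin n → ℝ := fun i j => if i = j ∧ (i : ℕ) < n - 1 then 1 else 0
    let xd : Fin n → Fin n → ℝ := fun i j => if i = j then 1 else 0
    (∀ i : Fin n, (i : ℕ) < n - 1 →
        ∀ y, validAlloc s y → util R y i ≤ util R x i) ∧
      ¬ maxCES ρ s R x ∧
      maxCES ρ s R xd ∧
      ∀ z, maxCES ρ s R z → z = xd :=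
  no_veto_power_general n hn ρ

end BandwidthAlloc
end
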